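/- Let K be a field of characteristic zero with subfields E ⊆ L, let x̄ be a tuple from K algebraically independent over L, and let ℓ ∈ L \ E. If there is a non-scalar g ∈ GL₂(E(x̄)) with g·ℓ = ℓ (Möbius action), then there is a non-scalar h ∈ GL₂(E) with h·ℓ = ℓphy. -/

import Mathlib

/-- A `2 × 2` matrix is scalar if it is a scalar multiple of the identity. -/
def IsScalarMatrix {K : Type*} [Field K] (g : Matrix (Fin 2) (Fin 2) K) : Prop :=
  ∃ c : K, g = c • (1 : Matrix (Fin 2) (Fin 2) K)

/-!
A fixed point `ℓ` of a non-scalar `g = !![a, b; c, d]` satisfies the quadratic relation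
`c ℓ² + (d - a) ℓ - b = 0`, whose coefficients are not all zero and lie in `E(x̄)`.
After clearing denominators they become polynomials in `x̄` over `E`; as `ℓ ∈ L` and `x̄` is
algebraically independent over `L`, the relation holds coefficientwise, so some monomial gives a
nontrivial relation `α ℓ² + β ℓ + γ = 0` over `E`. Since `ℓ ∉ E`, this forces `α γ ≠ 0`, and the
companion matrix `!![0, -γ; α, β]` lies in `GL₂(E)`, is not scalar, and fixes `ℓ`.
-/

open MvPolynomial

section

variable {K : Type*} [Field K]

theorem isScalarMatrix_iff (g : Matrix (Fin 2) (Fin 2) K) :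
    IsScalarMatrix g ↔ g 0 1 = 0 ∧ g 1 0 = 0 ∧ g 0 0 = g 1 1 := by
  constructor
  · rintro ⟨c, rfl⟩
    simp
  · rintro ⟨h01, h10, h00⟩
    refine ⟨g 1 1, ?_⟩
    ext i j
    fin_cases i <;> fin_cases j <;> simp [h01, h10, h00]

theorem mobius_fixed_iff {g : Matrix (Fin 2) (Fin 2) K} {z : K} (hz : g 1 0 * z + g 1 1 ≠ 0) :
    z = (g 0 0 * z + g 0 1) / (g 1 0 * z + g 1 1) ↔
      g 1 0 * z ^ 2 + (g 1 1 - g 0 0) * z + -g 0 1 = 0 := by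
  rw [eq_div_iff hz]
  constructor <;> intro h <;> linear_combination h

theorem quadratic_coeff_ne_zero_of_notMem {E : Subfield K} {z a b c : K} (hz : z ∉ E)
    (ha : a ∈ E) (hb : b ∈ E) (hc : c ∈ E) (hne : ¬(a = 0 ∧ b = 0 ∧ c = 0))
    (hrel : a * z ^ 2 + b * z + c = 0) :
    a ≠ 0 ∧ c ≠ 0 ∧ a * z + b ≠ 0 := by
  have hlin : ∀ {u v : K}, u ∈ E → v ∈ E → u * z + v = 0 → u = 0 := by
    intro u v hu hv huv
    by_contra hu0
    exact hz (by
      rw [show z = -v / u by field_simp; linear_combination huv]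
      exact div_mem (neg_mem hv) hu)
  have ha0 : a ≠ 0 := by
    rintro rfl
    have hb0 : b = 0 := hlin hb hc (by linear_combination hrel)
    exact hne ⟨rfl, hb0, by linear_combination hrel - z * hb0⟩
  have hden : a * z + b ≠ 0 := fun h => ha0 (hlin ha hb h)
  have hz0 : z ≠ 0 := by rintro rfl; exact hz (zero_mem E)
  refine ⟨ha0, fun hc0 => ?_, hden⟩
  exact mul_ne_zero hz0 hden (by linear_combination hrel - hc0)

theorem exists_matrix_fixing_of_quadratic {E : Subfield K} {z a b c : K}
    (ha : a ∈ E) (hb : b ∈ E) (hc : c ∈ E) (ha0 : a ≠ 0) (hc0 : c ≠ 0) (hden : a * z + b ≠ 0)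
    (hrel : a * z ^ 2 + b * z + c = 0) :
    ∃ h : Matrix (Fin 2) (Fin 2) K, (∀ i j, h i j ∈ E) ∧ h.det ≠ 0 ∧
      ¬ IsScalarMatrix h ∧ h 1 0 * z + h 1 1 ≠ 0 ∧
      z = (h 0 0 * z + h 0 1) / (h 1 0 * z + h 1 1) := by
  refine ⟨!![0, -c; a, b], ?_, ?_, ?_, by simpa using hden, ?_⟩
  · intro i j
    fin_cases i <;> fin_cases j <;> simp [ha, hb, hc, zero_mem]
  · simp [Matrix.det_fin_two_of, ha0, hc0]
  · simp [isScalarMatrix_iff, ha0]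
  · simp only [Matrix.of_apply, Matrix.cons_val', Matrix.cons_val_zero, Matrix.cons_val_one,
      Matrix.empty_val', Matrix.cons_val_fin_one]
    rw [eq_div_iff hden]
    linear_combination hrel

theorem mem_closure_iff_exists_aeval_div (E : Subfield K) {σ : Type*} (x : σ → K) {w : K} :
    w ∈ Subfield.closure (E ∪ Set.range x) ↔
      ∃ r s : MvPolynomial σ E, aeval x s ≠ 0 ∧ w = aeval x r / aeval x s := by
  have hE : Set.range (algebraMap E K) = E := Subtype.range_coe
  rw [← hE, ← IntermediateField.adjoin_toSubfield, IntermediateField.mem_toSubfield,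
    IntermediateField.mem_adjoin_range_iff]
  refine ⟨fun ⟨r, s, hw⟩ => ?_, fun ⟨r, s, _, hw⟩ => ⟨r, s, hw⟩⟩
  by_cases hs : aeval x s = 0
  · exact ⟨0, 1, by simp, by simp [hw, hs]⟩
  · exact ⟨r, s, hs, hw⟩

theorem exists_common_denominator (E : Subfield K) {ι σ : Type*} [Fintype ι] (x : σ → K)
    {c : ι → K} (hc : ∀ i, c i ∈ Subfield.closure (E ∪ Set.range x)) :
    ∃ (D : MvPolynomial σ E) (P : ι → MvPolynomial σ E),
      aeval x D ≠ 0 ∧ ∀ i, aeval x (P i) = aeval x D * c i := by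
  classical
  choose r s hs hrs using fun i => (mem_closure_iff_exists_aeval_div E x).1 (hc i)
  refine ⟨∏ i, s i, fun i => r i * ∏ j ∈ Finset.univ.erase i, s j,
    by simpa [Finset.prod_ne_zero_iff] using hs, fun i => ?_⟩
  rw [← Finset.mul_prod_erase _ s (Finset.mem_univ i), hrs i]
  simp only [map_mul, map_prod]
  field_simp [hs i]

theorem aeval_map_inclusion {E L : Subfield K} (hEL : E ≤ L) {σ : Type*} (x : σ → K)
    (p : MvPolynomial σ E) : aeval x (map (Subfield.inclusion hEL) p) = aeval x p := by
  rw [aeval_def, aeval_def, eval₂_map]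
  rfl

theorem sum_coeff_mul_eq_zero {E L : Subfield K} (hEL : E ≤ L) {ι σ : Type*} [Fintype ι]
    {x : σ → K} (hx : AlgebraicIndependent L x) {v : ι → K} (hv : ∀ i, v i ∈ L)
    {P : ι → MvPolynomial σ E} (hP : ∑ i, aeval x (P i) * v i = 0) (m : σ →₀ ℕ) :
    ∑ i, ((coeff m (P i) : E) : K) * v i = 0 := by
  set Q : MvPolynomial σ L := ∑ i, C ⟨v i, hv i⟩ * map (Subfield.inclusion hEL) (P i)
  have hQ : aeval x Q = 0 := by
    simp only [Q, map_sum, map_mul, aeval_C, aeval_map_inclusion]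
    rw [← hP]
    exact Finset.sum_congr rfl fun i _ => mul_comm _ _
  have hcoeff : coeff m Q = 0 := by rw [hx.eq_zero_of_aeval_eq_zero Q hQ, coeff_zero]
  simp only [Q, coeff_sum, coeff_C_mul, coeff_map] at hcoeff
  have := congrArg (algebraMap L K) hcoeff
  push_cast at this
  rw [← this]
  exact Finset.sum_congr rfl fun i _ => mul_comm _ _

theorem exists_linear_relation_of_algebraicIndependent {E L : Subfield K} (hEL : E ≤ L)
    {ι σ : Type*} [Fintype ι] {x : σ → K} (hx : AlgebraicIndependent L x) {v : ι → K}
    (hv : ∀ i, v i ∈ L) {c : ι → K} (hc : ∀ i, c i ∈ Subfield.closure (E ∪ Set.range x))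
    (hc0 : c ≠ 0) (hrel : ∑ i, c i * v i = 0) :
    ∃ e : ι → K, (∀ i, e i ∈ E) ∧ e ≠ 0 ∧ ∑ i, e i * v i = 0 := by
  obtain ⟨D, P, hD, hP⟩ := exists_common_denominator E x hc
  have hPrel : ∑ i, aeval x (P i) * v i = 0 := by
    simp only [hP, mul_assoc, ← Finset.mul_sum, hrel, mul_zero]
  obtain ⟨i, hi⟩ := Function.ne_iff.1 hc0
  have hPi : P i ≠ 0 := fun h => mul_ne_zero hD hi (by rw [← hP, h, map_zero])
  obtain ⟨m, hm⟩ := ne_zero_iff.1 hPi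
  exact ⟨fun j => ((coeff m (P j) : E) : K), fun j => (coeff m (P j)).2,
    Function.ne_iff.2 ⟨i, by simpa using hm⟩, sum_coeff_mul_eq_zero hEL hx hv hPrel m⟩

end

theorem stmt9_general {K : Type*} [Field K] (E L : Subfield K) (hEL : E ≤ L)
    {n : ℕ} (x : Fin n → K) (hx : AlgebraicIndependent L x)
    (ℓ : K) (hℓ : ℓ ∈ L) (hℓE : ℓ ∉ E)
    (g : Matrix (Fin 2) (Fin 2) K)
    (hgE : ∀ i j, g i j ∈ Subfield.closure (↑E ∪ Set.range x))
    (hgns : ¬ IsScalarMatrix g)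
    (hden : g 1 0 * ℓ + g 1 1 ≠ 0)
    (hact : ℓ = (g 0 0 * ℓ + g 0 1) / (g 1 0 * ℓ + g 1 1)) :
    ∃ h : Matrix (Fin 2) (Fin 2) K, (∀ i j, h i j ∈ E) ∧ h.det ≠ 0 ∧
      ¬ IsScalarMatrix h ∧ h 1 0 * ℓ + h 1 1 ≠ 0 ∧
      ℓ = (h 0 0 * ℓ + h 0 1) / (h 1 0 * ℓ + h 1 1) := by
  set c : Fin 3 → K := ![g 1 0, g 1 1 - g 0 0, -g 0 1]
  set v : Fin 3 → K := ![ℓ ^ 2, ℓ, 1]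
  have hc : ∀ i, c i ∈ Subfield.closure (↑E ∪ Set.range x) := by
    intro i
    fin_cases i
    exacts [hgE 1 0, sub_mem (hgE 1 1) (hgE 0 0), neg_mem (hgE 0 1)]
  have hc0 : c ≠ 0 := by
    intro h0
    refine hgns ((isScalarMatrix_iff g).2 ⟨?_, ?_, ?_⟩)
    · simpa [c] using congrFun h0 2
    · simpa [c] using congrFun h0 0
    · exact (sub_eq_zero.1 (by simpa [c] using congrFun h0 1)).symm
  have hv : ∀ i, v i ∈ L := by
    intro i
    fin_cases i
    exacts [pow_mem hℓ 2, hℓ, one_mem L]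
  have hrel : ∑ i, c i * v i = 0 := by
    simpa [c, v, Fin.sum_univ_three] using (mobius_fixed_iff hden).1 hact
  obtain ⟨e, heE, he0, herel⟩ :=
    exists_linear_relation_of_algebraicIndependent hEL hx hv hc hc0 hrel
  have hquad : e 0 * ℓ ^ 2 + e 1 * ℓ + e 2 = 0 := by simpa [v, Fin.sum_univ_three] using herel
  have hne : ¬(e 0 = 0 ∧ e 1 = 0 ∧ e 2 = 0) := fun ⟨h0, h1, h2⟩ =>
    he0 (funext fun i => by fin_cases i <;> assumption)
  obtain ⟨hlead, hconst, hdenE⟩ :=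
    quadratic_coeff_ne_zero_of_notMem hℓE (heE 0) (heE 1) (heE 2) hne hquad
  exact exists_matrix_fixing_of_quadratic (heE 0) (heE 1) (heE 2) hlead hconst hdenE hquad

theorem stmt9 {K : Type*} [Field K] [CharZero K] (E L : Subfield K) (hEL : E ≤ L)
    {n : ℕ} (x : Fin n → K) (hx : AlgebraicIndependent L x)
    (ℓ : K) (hℓ : ℓ ∈ L) (hℓE : ℓ ∉ E)
    (g : Matrix (Fin 2) (Fin 2) K)
    (hgE : ∀ i j, g i j ∈ Subfield.closure (↑E ∪ Set.range x))
    (hgdet : g.det ≠ 0) (hgns : ¬ IsScalarMatrix g)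
    (hden : g 1 0 * ℓ + g 1 1 ≠ 0)
    (hact : ℓ = (g 0 0 * ℓ + g 0 1) / (g 1 0 * ℓ + g 1 1)) :
    ∃ h : Matrix (Fin 2) (Fin 2) K, (∀ i j, h i j ∈ E) ∧ h.det ≠ 0 ∧
      ¬ IsScalarMatrix h ∧ h 1 0 * ℓ + h 1 1 ≠ 0 ∧
      ℓ = (h 0 0 * ℓ + h 0 1) / (h 1 0 * ℓ + h 1 1) :=
  stmt9_general E L hEL x hx ℓ hℓ hℓE g hgE hgns hden hact
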